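/- If a category admits an orthogonal factorisation system whose left class consists of epimorphisms and whose right class consists of monomorphisms, then the category is Cauchy complete (idempotent complete): every idempotent splits. -/

import Mathlib

open CategoryTheory

section

variable {C : Type*} [Category C]

/-- Cancelling `l` on the left and `r` on the right reduces this to `p ≫ p = p`. -/
theorem hom_comp_eq_id_of_epi_mono_of_idem {X Z : C} {p : X ⟶ X} (hp : p ≫ p = p)
    (l : X ⟶ Z) (r : Z ⟶ X) [Epi l] [Mono r] (hlr : l ≫ r = p) : r ≫ l = 𝟙 Z := by
  have hsandwich : l ≫ (r ≫ l) ≫ r = l ≫ 𝟙 Z ≫ r := by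
    simp only [Category.id_comp, ← Category.assoc, hlr]
    rw [Category.assoc, hlr, hp]
  exact (cancel_mono r).mp ((cancel_epi l).mp hsandwich)

theorem isIdempotentComplete_of_exists_epi_mono_factorisation
    (hfact : ∀ (X : C) (p : X ⟶ X), p ≫ p = p →
      ∃ (Z : C) (l : X ⟶ Z) (r : Z ⟶ X), Epi l ∧ Mono r ∧ l ≫ r = p) :
    IsIdempotentComplete C := by
  refine ⟨fun X p hp => ?_⟩
  obtain ⟨Z, l, r, hl, hr, hlr⟩ := hfact X p hp
  exact ⟨Z, r, l, hom_comp_eq_id_of_epi_mono_of_idem hp l r hlr, hlr⟩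

end

theorem isIdempotentComplete_of_epi_mono_factorisation_general {𝒞 : Type*} [Category 𝒞]
    (L R : MorphismProperty 𝒞)
    (hL_epi : ∀ {X Y : 𝒞} (f : X ⟶ Y), L f → Epi f)
    (hR_mono : ∀ {X Y : 𝒞} (f : X ⟶ Y), R f → Mono f)
    (hfact : ∀ {X Y : 𝒞} (f : X ⟶ Y),
      ∃ (Z : 𝒞) (l : X ⟶ Z) (r : Z ⟶ Y), L l ∧ R r ∧ l ≫ r = f) :
    IsIdempotentComplete 𝒞 := by
  refine isIdempotentComplete_of_exists_epi_mono_factorisation fun X p _ => ?_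
  obtain ⟨Z, l, r, hl, hr, hlr⟩ := hfact p
  exact ⟨Z, l, r, hL_epi l hl, hR_mono r hr, hlr⟩

/-- A category with an orthogonal factorisation system whose left class consists of
epimorphisms and whose right class consists of monomorphisms is Cauchy complete
(idempotent complete). -/
theorem isIdempotentComplete_of_epi_mono_factorisation {𝒞 : Type*} [Category 𝒞]
    (L R : MorphismProperty 𝒞)
    (hL_iso : ∀ {X Y : 𝒞} (f : X ⟶ Y), IsIso f → L f)
    (hR_iso : ∀ {X Y : 𝒞} (f : X ⟶ Y), IsIso f → R f)
    (hL_comp : L.IsStableUnderComposition) (hR_comp : R.IsStableUnderComposition)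
    (hL_epi : ∀ {X Y : 𝒞} (f : X ⟶ Y), L f → Epi f)
    (hR_mono : ∀ {X Y : 𝒞} (f : X ⟶ Y), R f → Mono f)
    (hfact : ∀ {X Y : 𝒞} (f : X ⟶ Y),
      ∃ (Z : 𝒞) (l : X ⟶ Z) (r : Z ⟶ Y), L l ∧ R r ∧ l ≫ r = f)
    (horth : ∀ {A B X Y : 𝒞} (l : A ⟶ B) (r : X ⟶ Y), L l → R r →
      HasLiftingProperty l r) :
    IsIdempotentComplete 𝒞 :=
  isIdempotentComplete_of_epi_mono_factorisation_general L R hL_epi hR_mono hfact
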